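/- arXiv:1204.3336 — 5 statements merged into one kernel-verified Lean document; each statement's English description precedes it below -/
import Mathlib

section
/- Let A be a self-adjoint bounded operator on a complex Hilbert space with σ(A) ⊆ [λ₁, λ₂], λ₁ > 0, and suppose neither λ₁ nor λ₂ is an eigenvalue of A. Then for every unitary operator U, the operator UA has no eigenvalue λ with |λ| = λ₁, and no eigenvalue λ with |λ| = λ₂. -/
/-!
If `UAx = μx` with `U` unitary, then `‖Ax‖ = |μ| ‖x‖`. Since `σ(A) ⊆ [λ₁, λ₂]`, the self-adjoint
operator `A - m` with `m = (λ₁ + λ₂)/2` has norm at most `r = (λ₂ - λ₁)/2`, so `Ax` lies in the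
ball of radius `r‖x‖` around `m x`. For `|μ| = λ₁` or `λ₂` the sphere of radius `|μ| ‖x‖` touches
that ball only at `|μ| x`, hence `Ax = |μ| x`, and `|μ|` is an eigenvalue of `A`.
-/

open scoped InnerProductSpace

lemma IsSelfAdjoint.norm_le_of_forall_mem_spectrum {A : Type*} [CStarAlgebra A] {a : A}
    (ha : IsSelfAdjoint a) {r : ℝ} (hr : 0 ≤ r) (h : ∀ z ∈ spectrum ℂ a, ‖z‖ ≤ r) :
    ‖a‖ ≤ r := by
  have hρ : spectralRadius ℂ a ≤ (r.toNNReal : ENNReal) :=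
    iSup₂_le fun z hz => ENNReal.coe_le_coe.mpr (Real.le_toNNReal_iff_coe_le hr |>.mpr (h z hz))
  rw [ha.spectralRadius_eq_nnnorm, ENNReal.coe_le_coe, Real.le_toNNReal_iff_coe_le hr] at hρ
  exact hρ

lemma IsSelfAdjoint.norm_sub_midpoint_le {A : Type*} [CStarAlgebra A] {a : A}
    (ha : IsSelfAdjoint a) {l₁ l₂ : ℝ} (h : l₁ ≤ l₂)
    (hspec : spectrum ℂ a ⊆ Complex.ofReal '' Set.Icc l₁ l₂) :
    ‖a - algebraMap ℂ A ((l₁ + l₂) / 2 : ℝ)‖ ≤ (l₂ - l₁) / 2 := by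
  refine (ha.sub (.algebraMap A (Complex.conj_ofReal _))).norm_le_of_forall_mem_spectrum
    (by linarith) fun z hz => ?_
  rw [← spectrum.sub_singleton_eq] at hz
  obtain ⟨w, hw, _, rfl, rfl⟩ := hz
  obtain ⟨t, ⟨ht₁, ht₂⟩, rfl⟩ := hspec hw
  dsimp only
  rw [← Complex.ofReal_sub, Complex.norm_real, Real.norm_eq_abs, abs_le]
  constructor <;> linarith

lemma eq_smul_of_norm_sub_smul_le {𝕜 E : Type*} [RCLike 𝕜] [NormedAddCommGroup E]
    [InnerProductSpace 𝕜 E] {v x : E} {m r l : ℝ} (hm : 0 < m) (hl : 0 ≤ l)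
    (hlm : (l - m) ^ 2 = r ^ 2) (hv : ‖v - (m : 𝕜) • x‖ ≤ r * ‖x‖) (hvx : ‖v‖ = l * ‖x‖) :
    v = (l : 𝕜) • x := by
  have norm_sub_smul_sq (c : ℝ) :
      ‖v - (c : 𝕜) • x‖ ^ 2 = ‖v‖ ^ 2 - 2 * c * RCLike.re ⟪v, x⟫_𝕜 + c ^ 2 * ‖x‖ ^ 2 := by
    rw [norm_sub_sq (𝕜 := 𝕜), inner_smul_right, RCLike.re_ofReal_mul, norm_smul,
      RCLike.norm_ofReal, mul_pow, sq_abs]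
    ring
  have hsq : ‖v - (m : 𝕜) • x‖ ^ 2 ≤ (r * ‖x‖) ^ 2 := pow_le_pow_left₀ (norm_nonneg _) hv 2
  have hre : l * ‖x‖ ^ 2 ≤ RCLike.re ⟪v, x⟫_𝕜 := by
    rw [norm_sub_smul_sq, hvx] at hsq
    nlinarith
  have hzero : ‖v - (l : 𝕜) • x‖ ^ 2 ≤ 0 := by
    rw [norm_sub_smul_sq, hvx]
    nlinarith
  rw [← sub_eq_zero, ← norm_eq_zero]
  exact pow_eq_zero_iff two_ne_zero |>.mp (le_antisymm hzero (sq_nonneg _))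

theorem IsSelfAdjoint.apply_eq_smul_of_norm_apply_eq {H : Type*} [NormedAddCommGroup H]
    [InnerProductSpace ℂ H] [CompleteSpace H] {A : H →L[ℂ] H} (hA : IsSelfAdjoint A)
    {l₁ l₂ l : ℝ} (hl₁ : 0 < l₁) (hl₁₂ : l₁ ≤ l₂)
    (hspec : spectrum ℂ A ⊆ Complex.ofReal '' Set.Icc l₁ l₂) (hl : l = l₁ ∨ l = l₂) {x : H}
    (hx : ‖A x‖ = l * ‖x‖) : A x = (l : ℂ) • x := by
  have hmid := (A - algebraMap ℂ _ ((l₁ + l₂) / 2 : ℝ)).le_opNorm x |>.trans <|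
    mul_le_mul_of_nonneg_right (hA.norm_sub_midpoint_le hl₁₂ hspec) (norm_nonneg x)
  simp only [sub_apply, Algebra.algebraMap_eq_smul_one, smul_apply, one_apply_eq_self] at hmid
  refine eq_smul_of_norm_sub_smul_le (m := (l₁ + l₂) / 2) (r := (l₂ - l₁) / 2) (by linarith)
    ?_ ?_ hmid hx
  · rcases hl with rfl | rfl <;> linarith
  · rcases hl with rfl | rfl <;> ring

/-- If `A` is self-adjoint with `σ(A) ⊆ [λ₁, λ₂]`, `λ₁ > 0`, and neither `λ₁` nor `λ₂`
is an eigenvalue of `A`, then for every unitary `U` the operator `UA` has no eigenvalue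
of modulus `λ₁` and no eigenvalue of modulus `λ₂`. -/
theorem stmt3 {H : Type*} [NormedAddCommGroup H] [InnerProductSpace ℂ H] [CompleteSpace H]
    (A : H →L[ℂ] H) (hA : IsSelfAdjoint A) (l1 l2 : ℝ) (hl1 : 0 < l1) (hl12 : l1 ≤ l2)
    (hspec : spectrum ℂ A ⊆ Complex.ofReal '' Set.Icc l1 l2)
    (h1 : ¬ ∃ x : H, x ≠ 0 ∧ A x = (l1 : ℂ) • x)
    (h2 : ¬ ∃ x : H, x ≠ 0 ∧ A x = (l2 : ℂ) • x) :
    ∀ U : H →L[ℂ] H, U ∈ unitary (H →L[ℂ] H) →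
      ∀ μ : ℂ, (‖μ‖ = l1 ∨ ‖μ‖ = l2) →
        ¬ ∃ x : H, x ≠ 0 ∧ (U * A) x = μ • x := by
  rintro U hU μ hμ ⟨x, hx, hUAx⟩
  have hAx : ‖A x‖ = ‖μ‖ * ‖x‖ := by
    rw [← U.norm_map_of_mem_unitary hU, show U (A x) = μ • x from hUAx, norm_smul]
  have hAx_eq := hA.apply_eq_smul_of_norm_apply_eq hl1 hl12 hspec hμ hAx
  rcases hμ with hμ | hμ <;> rw [hμ] at hAx_eq
  exacts [h1 ⟨x, hx, hAx_eq⟩, h2 ⟨x, hx, hAx_eq⟩]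
end

section
/- Let A be a self-adjoint bounded operator with σ(A) ⊆ [λ₁, λ₂], λ₁ > 0, let U be unitary, and suppose UAx = λx for some nonzero x with |λ| = λ₁. Then Ker(λI − UA) ⊆ Ker(λ₁I − A), this kernel is a reducing subspace for both A and U, and A restricted to it equals λ₁ times the identity. -/
/-!
For `y ∈ K` we have `‖A y‖ = ‖U (A y)‖ = ‖λ y‖ = λ₁ ‖y‖`, while `σ(A) ⊆ [λ₁, ∞)` gives
`λ₁ ‖y‖² ≤ re ⟪A y, y⟫`; expanding `‖A y - λ₁ y‖²` with these two bounds shows it vanishes.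
So `A = λ₁` on `K`, whence `U = λ / λ₁` and `U* = (λ / λ₁)⁻¹` on `K`: `K` is invariant under
`A`, `U` and their adjoints, so `Kᗮ` is invariant under `A` and `U`.
-/

open ContinuousLinearMap Submodule

section

variable {𝕜 E : Type*} [RCLike 𝕜] [NormedAddCommGroup E] [InnerProductSpace 𝕜 E]

theorem eq_smul_of_norm_le_of_mul_norm_sq_le_re_inner {u y : E} {c : ℝ} (hc : 0 ≤ c)
    (hnorm : ‖u‖ ≤ c * ‖y‖) (hre : c * ‖y‖ ^ 2 ≤ RCLike.re (inner 𝕜 u y)) :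
    u = (c : 𝕜) • y := by
  have hsq : ‖u - (c : 𝕜) • y‖ ^ 2 ≤ 0 := by
    have hu : ‖u‖ ^ 2 ≤ (c * ‖y‖) ^ 2 := pow_le_pow_left₀ (norm_nonneg u) hnorm 2
    rw [norm_sub_sq (𝕜 := 𝕜), inner_smul_right, RCLike.re_ofReal_mul, norm_smul,
      RCLike.norm_ofReal, abs_of_nonneg hc]
    nlinarith
  rw [← sub_eq_zero, ← norm_eq_zero]
  exact pow_eq_zero_iff two_ne_zero |>.mp (le_antisymm hsq (sq_nonneg _))

theorem mem_ker_smul_one_sub_iff (T : E →L[𝕜] E) (c : 𝕜) (y : E) :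
    y ∈ LinearMap.ker ((c • (1 : E →L[𝕜] E) - T : E →L[𝕜] E) : E →ₗ[𝕜] E) ↔ T y = c • y := by
  rw [LinearMap.mem_ker, coe_coe, sub_apply, sub_eq_zero, eq_comm]
  rfl

theorem apply_mem_of_forall_apply_eq_smul {T : E →L[𝕜] E} {K : Submodule 𝕜 E} {c : 𝕜}
    (hT : ∀ y ∈ K, T y = c • y) {y : E} (hy : y ∈ K) : T y ∈ K :=
  hT y hy ▸ K.smul_mem c hy

theorem apply_mem_orthogonal_of_forall_adjoint_apply_eq_smul [CompleteSpace E]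
    {T : E →L[𝕜] E} {K : Submodule 𝕜 E} {c : 𝕜} (hT : ∀ y ∈ K, adjoint T y = c • y)
    {z : E} (hz : z ∈ Kᗮ) : T z ∈ Kᗮ := by
  have hK : K ∈ Module.End.invtSubmodule (adjoint T).toLinearMap :=
    (Module.End.mem_invtSubmodule_iff_forall_mem_of_mem _).mpr fun y hy ↦
      apply_mem_of_forall_apply_eq_smul hT hy
  exact (Module.End.mem_invtSubmodule_iff_forall_mem_of_mem _).mp
    (orthogonal_mem_invtSubmodule hK) z hz

theorem star_apply_eq_inv_smul_of_mem_unitary [CompleteSpace E] {U : E →L[𝕜] E}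
    (hU : U ∈ unitary (E →L[𝕜] E)) {c : 𝕜} {y : E} (hy : U y = c • y) :
    star U y = c⁻¹ • y := by
  have hy' : y = c • star U y := by
    rw [← map_smul, ← hy, ← mul_apply_eq_comp, Unitary.star_mul_self_of_mem hU,
      one_apply_eq_self]
  rcases eq_or_ne c 0 with rfl | hc
  · rw [zero_smul] at hy'
    simp [hy']
  · conv_rhs => rw [hy', smul_smul, inv_mul_cancel₀ hc, one_smul]

end

theorem IsSelfAdjoint.mul_norm_sq_le_re_inner_of_spectrum_subset_Ici {H : Type*}
    [NormedAddCommGroup H] [InnerProductSpace ℂ H] [CompleteSpace H] {A : H →L[ℂ] H}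
    (hA : IsSelfAdjoint A) {c : ℝ}
    (hspec : spectrum ℂ A ⊆ Complex.ofReal '' Set.Ici c) (v : H) :
    c * ‖v‖ ^ 2 ≤ RCLike.re (inner ℂ (A v) v) := by
  have hle : algebraMap ℝ (H →L[ℂ] H) c ≤ A := by
    refine (algebraMap_le_iff_le_spectrum hA).mpr fun r hr ↦ ?_
    obtain ⟨s, hs, hsr⟩ := hspec ((spectrum.algebraMap_mem_iff ℂ).mpr hr)
    rw [Complex.coe_algebraMap] at hsr
    exact Complex.ofReal_injective hsr ▸ hs
  have := ((le_def _ _).mp hle).re_inner_nonneg_left v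
  rwa [sub_apply, inner_sub_left, map_sub, sub_nonneg, Algebra.algebraMap_eq_smul_one,
    smul_apply, one_apply_eq_self, ← Complex.coe_smul, inner_smul_left, Complex.conj_ofReal,
    RCLike.re_to_complex, Complex.re_ofReal_mul, ← RCLike.re_to_complex,
    inner_self_eq_norm_sq] at this

theorem stmt4_general {H : Type*} [NormedAddCommGroup H] [InnerProductSpace ℂ H] [CompleteSpace H]
    (A : H →L[ℂ] H) (hA : IsSelfAdjoint A) (l1 l2 : ℝ) (hl1 : 0 < l1)
    (hspec : spectrum ℂ A ⊆ Complex.ofReal '' Set.Icc l1 l2)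
    (U : H →L[ℂ] H) (hU : U ∈ unitary (H →L[ℂ] H))
    (μ : ℂ) (hμ : ‖μ‖ = l1)
    (K : Submodule ℂ H) (hK : K = LinearMap.ker ((μ • (1 : H →L[ℂ] H) - U * A : H →L[ℂ] H) : H →ₗ[ℂ] H)) :
    (∀ y ∈ K, A y = (l1 : ℂ) • y) ∧
    (K ≤ LinearMap.ker (((l1 : ℂ) • (1 : H →L[ℂ] H) - A : H →L[ℂ] H) : H →ₗ[ℂ] H)) ∧
    (∀ y ∈ K, A y ∈ K) ∧ (∀ y ∈ K, U y ∈ K) ∧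
    (∀ y ∈ Kᗮ, A y ∈ Kᗮ) ∧ (∀ y ∈ Kᗮ, U y ∈ Kᗮ) := by
  have hmemK : ∀ y, y ∈ K ↔ U (A y) = μ • y := fun y ↦ hK ▸ mem_ker_smul_one_sub_iff _ _ _
  have hAK : ∀ y ∈ K, A y = (l1 : ℂ) • y := fun y hy ↦
    eq_smul_of_norm_le_of_mul_norm_sq_le_re_inner hl1.le
      (by rw [← norm_map_of_mem_unitary hU, (hmemK y).mp hy, norm_smul, hμ])
      (hA.mul_norm_sq_le_re_inner_of_spectrum_subset_Ici
        (hspec.trans (Set.image_mono Set.Icc_subset_Ici_self)) y)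
  have hUK : ∀ y ∈ K, U y = (μ / l1) • y := by
    intro y hy
    have hUAy := (hmemK y).mp hy
    rw [hAK y hy, map_smul] at hUAy
    rw [div_eq_inv_mul, mul_smul, ← hUAy, smul_smul, inv_mul_cancel₀ (by exact_mod_cast hl1.ne'),
      one_smul]
  have hAadjK : ∀ y ∈ K, adjoint A y = (l1 : ℂ) • y := by rwa [hA.adjoint_eq]
  have hUadjK : ∀ y ∈ K, adjoint U y = (μ / l1)⁻¹ • y := fun y hy ↦ by
    rw [← star_eq_adjoint]
    exact star_apply_eq_inv_smul_of_mem_unitary hU (hUK y hy)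
  exact ⟨hAK, fun y hy ↦ (mem_ker_smul_one_sub_iff _ _ _).mpr (hAK y hy),
    fun _ ↦ apply_mem_of_forall_apply_eq_smul hAK, fun _ ↦ apply_mem_of_forall_apply_eq_smul hUK,
    fun _ ↦ apply_mem_orthogonal_of_forall_adjoint_apply_eq_smul hAadjK,
    fun _ ↦ apply_mem_orthogonal_of_forall_adjoint_apply_eq_smul hUadjK⟩

/-- If `A` is self-adjoint with `σ(A) ⊆ [λ₁, λ₂]`, `λ₁ > 0`, `U` unitary, and
`UAx = λx` for some nonzero `x` with `|λ| = λ₁`, then `K = Ker(λI − UA)` is contained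
in `Ker(λ₁I − A)` (indeed `A` acts on `K` as `λ₁` times the identity) and `K` is a
reducing subspace for both `A` and `U`. -/
theorem stmt4 {H : Type*} [NormedAddCommGroup H] [InnerProductSpace ℂ H] [CompleteSpace H]
    (A : H →L[ℂ] H) (hA : IsSelfAdjoint A) (l1 l2 : ℝ) (hl1 : 0 < l1) (hl12 : l1 ≤ l2)
    (hspec : spectrum ℂ A ⊆ Complex.ofReal '' Set.Icc l1 l2)
    (U : H →L[ℂ] H) (hU : U ∈ unitary (H →L[ℂ] H))
    (μ : ℂ) (hμ : ‖μ‖ = l1)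
    (x : H) (hx : x ≠ 0) (hev : (U * A) x = μ • x)
    (K : Submodule ℂ H) (hK : K = LinearMap.ker ((μ • (1 : H →L[ℂ] H) - U * A : H →L[ℂ] H) : H →ₗ[ℂ] H)) :
    (∀ y ∈ K, A y = (l1 : ℂ) • y) ∧
    (K ≤ LinearMap.ker (((l1 : ℂ) • (1 : H →L[ℂ] H) - A : H →L[ℂ] H) : H →ₗ[ℂ] H)) ∧
    (∀ y ∈ K, A y ∈ K) ∧ (∀ y ∈ K, U y ∈ K) ∧
    (∀ y ∈ Kᗮ, A y ∈ Kᗮ) ∧ (∀ y ∈ Kᗮ, U y ∈ Kᗮ) :=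
  stmt4_general A hA l1 l2 hl1 hspec U hU μ hμ K hK
end

section
/- Let W be the bilateral weighted shift on ℓ²(ℤ) defined by W e_n = w_n e_{n+1}, where w_n = λ₁ for n ≥ 0 and w_n = λ₂ for n ≤ −1, with 0 < λ₁ < λ₂. Then the point spectrum of W equals the open annulus {λ ∈ ℂ : λ₁ < |λ| < λ₂}. -/
/-!
Coordinatewise, `W x = μ • x` is the recurrence `w n * x n = μ * x (n + 1)`. If `‖μ‖ ≤ λ₁ ≤ ‖w n‖`
it forces `‖x n‖` to be nondecreasing, and if `‖w n‖ ≤ λ₂ ≤ ‖μ‖` nonincreasing; either way an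
`ℓ²` sequence, whose terms tend to `0` at both ends of `ℤ`, must vanish. Inside the annulus the
two-sided geometric sequence equal to `(λ₁ / μ) ^ n` for `n ≥ 0` and to `(μ / λ₂) ^ (-n)` for
`n ≤ 0` solves the recurrence and is square summable.
-/

open scoped ENNReal
open Filter Topology

section WeightedRecurrence

variable {𝕜 : Type*} [NormedField 𝕜] {w x : ℤ → 𝕜} {μ : 𝕜} {l : ℝ}

theorem monotone_norm_of_mul_eq_mul_succ (hl : 0 < l) (hw : ∀ n, l ≤ ‖w n‖) (hμ : ‖μ‖ ≤ l)
    (hx : ∀ n, w n * x n = μ * x (n + 1)) : Monotone fun n => ‖x n‖ := by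
  refine monotone_int_of_le_succ fun n => le_of_mul_le_mul_left ?_ hl
  calc l * ‖x n‖ ≤ ‖w n‖ * ‖x n‖ := by gcongr; exact hw n
    _ = ‖μ‖ * ‖x (n + 1)‖ := by rw [← norm_mul, hx, norm_mul]
    _ ≤ l * ‖x (n + 1)‖ := by gcongr

theorem antitone_norm_of_mul_eq_mul_succ (hl : 0 < l) (hw : ∀ n, ‖w n‖ ≤ l) (hμ : l ≤ ‖μ‖)
    (hx : ∀ n, w n * x n = μ * x (n + 1)) : Antitone fun n => ‖x n‖ := by
  refine antitone_int_of_succ_le fun n => le_of_mul_le_mul_left ?_ (hl.trans_le hμ)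
  calc ‖μ‖ * ‖x (n + 1)‖ = ‖w n‖ * ‖x n‖ := by rw [← norm_mul, ← hx, norm_mul]
    _ ≤ l * ‖x n‖ := by gcongr; exact hw n
    _ ≤ ‖μ‖ * ‖x n‖ := by gcongr

end WeightedRecurrence

namespace lp

variable {p : ℝ≥0∞}

theorem tendsto_norm_cofinite {E : ℤ → Type*} [∀ i, NormedAddCommGroup (E i)]
    (hp : 0 < p.toReal) (x : lp E p) : Tendsto (fun i => ‖x i‖) cofinite (𝓝 0) := by
  have h := ((lp.memℓp x).summable hp).tendsto_cofinite_zero.rpow_const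
    (p := p.toReal⁻¹) (Or.inr (inv_nonneg.2 hp.le))
  rw [Real.zero_rpow (inv_ne_zero hp.ne')] at h
  exact h.congr fun i => Real.rpow_rpow_inv (norm_nonneg _) hp.ne'

theorem eq_zero_of_monotone_norm {E : ℤ → Type*} [∀ i, NormedAddCommGroup (E i)]
    (hp : 0 < p.toReal) {x : lp E p} (hx : Monotone fun i => ‖x i‖) : x = 0 := by
  refine lp.ext <| funext fun i => norm_le_zero_iff.1 ?_
  exact hx.ge_of_tendsto ((tendsto_norm_cofinite hp x).mono_left atTop_le_cofinite) i

theorem eq_zero_of_antitone_norm {E : ℤ → Type*} [∀ i, NormedAddCommGroup (E i)]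
    (hp : 0 < p.toReal) {x : lp E p} (hx : Antitone fun i => ‖x i‖) : x = 0 := by
  refine lp.ext <| funext fun i => norm_le_zero_iff.1 ?_
  exact hx.ge_of_tendsto ((tendsto_norm_cofinite hp x).mono_left atBot_le_cofinite) i

variable {𝕜 : Type*} [NormedField 𝕜] [Fact (1 ≤ p)]
  {T : lp (fun _ : ℤ => 𝕜) p →L[𝕜] lp (fun _ : ℤ => 𝕜) p} {w : ℤ → 𝕜}

theorem weightedShift_apply_add_one (hp : p ≠ ∞)
    (hT : ∀ n, T (lp.single p n 1) = w n • lp.single p (n + 1) 1)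
    (x : lp (fun _ : ℤ => 𝕜) p) (n : ℤ) : T x (n + 1) = w n * x n := by
  have hTx (i : ℤ) : T (lp.single p i (x i)) (n + 1) = if i = n then w n * x n else 0 := by
    rw [← mul_one (x i), ← smul_eq_mul, lp.single_smul, map_smul, hT, lp.coeFn_smul,
      Pi.smul_apply, lp.coeFn_smul, Pi.smul_apply, lp.single_apply]
    split_ifs <;> simp_all [mul_comm]
  have hsum := ((evalCLM 𝕜 (fun _ : ℤ => 𝕜) p (n + 1)).comp T).hasSum (lp.hasSum_single hp x)
  simp only [ContinuousLinearMap.comp_apply] at hsum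
  exact hsum.unique (by simpa [evalCLM, hTx] using hasSum_ite_eq n (w n * x n))

theorem weightedShift_eq_smul_iff (hp : p ≠ ∞)
    (hT : ∀ n, T (lp.single p n 1) = w n • lp.single p (n + 1) 1)
    {x : lp (fun _ : ℤ => 𝕜) p} {μ : 𝕜} : T x = μ • x ↔ ∀ n, w n * x n = μ * x (n + 1) := by
  simp only [← weightedShift_apply_add_one hp hT, lp.ext_iff, funext_iff, lp.coeFn_smul,
    Pi.smul_apply, smul_eq_mul]
  refine ⟨fun h n => h (n + 1), fun h n => ?_⟩
  simpa using h (n - 1)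

theorem norm_mem_Ioo_of_weightedShift_eq_smul (hp : p ≠ ∞)
    (hT : ∀ n, T (lp.single p n 1) = w n • lp.single p (n + 1) 1) {l1 l2 : ℝ} (hl1 : 0 < l1)
    (hw : ∀ n, ‖w n‖ ∈ Set.Icc l1 l2) {x : lp (fun _ : ℤ => 𝕜) p} (hx : x ≠ 0) {μ : 𝕜}
    (hTx : T x = μ • x) : ‖μ‖ ∈ Set.Ioo l1 l2 := by
  have hrec := (weightedShift_eq_smul_iff hp hT).1 hTx
  have hp' : 0 < p.toReal := ENNReal.toReal_pos (zero_lt_one.trans_le Fact.out).ne' hp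
  have hl2 : 0 < l2 := hl1.trans_le ((hw 0).1.trans (hw 0).2)
  constructor
  · by_contra! h
    exact hx (eq_zero_of_monotone_norm hp'
      (monotone_norm_of_mul_eq_mul_succ hl1 (fun n => (hw n).1) h hrec))
  · by_contra! h
    exact hx (eq_zero_of_antitone_norm hp'
      (antitone_norm_of_mul_eq_mul_succ hl2 (fun n => (hw n).2) h hrec))

end lp

section TwoSidedGeometric

variable {𝕜 : Type*} [NormedField 𝕜] (a b : 𝕜)

-- `Int.toNat` truncates negative integers to `0`, so one of the two factors is always `1`.
def twoSidedGeometric (n : ℤ) : 𝕜 := a ^ n.toNat * b ^ (-n).toNat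

@[simp]
theorem twoSidedGeometric_natCast (n : ℕ) : twoSidedGeometric a b n = a ^ n := by
  simp [twoSidedGeometric]

@[simp]
theorem twoSidedGeometric_neg_natCast (n : ℕ) : twoSidedGeometric a b (-n) = b ^ n := by
  simp [twoSidedGeometric]

theorem twoSidedGeometric_add_one_of_nonneg {n : ℤ} (hn : 0 ≤ n) :
    twoSidedGeometric a b (n + 1) = a * twoSidedGeometric a b n := by
  lift n to ℕ using hn
  rw [← Nat.cast_succ, twoSidedGeometric_natCast, twoSidedGeometric_natCast, pow_succ']

theorem twoSidedGeometric_of_neg {n : ℤ} (hn : n < 0) :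
    twoSidedGeometric a b n = b * twoSidedGeometric a b (n + 1) := by
  obtain ⟨m, rfl⟩ : ∃ m : ℕ, n = -(m + 1 : ℕ) := ⟨(-n - 1).toNat, by omega⟩
  rw [show -((m + 1 : ℕ) : ℤ) + 1 = -m by push_cast; ring, twoSidedGeometric_neg_natCast,
    twoSidedGeometric_neg_natCast, pow_succ']

theorem memℓp_twoSidedGeometric {p : ℝ≥0∞} (hp : 0 < p.toReal) {a b : 𝕜} (ha : ‖a‖ < 1)
    (hb : ‖b‖ < 1) : Memℓp (twoSidedGeometric a b) p := by
  have geom {c : 𝕜} (hc : ‖c‖ < 1) : Summable fun n : ℕ => ‖c ^ n‖ ^ p.toReal := by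
    simp_rw [norm_pow, ← Real.rpow_natCast, ← Real.rpow_mul (norm_nonneg c), mul_comm,
      Real.rpow_mul (norm_nonneg c), Real.rpow_natCast]
    exact summable_geometric_of_lt_one (by positivity)
      (Real.rpow_lt_one (norm_nonneg c) hc hp)
  exact memℓp_gen (.of_nat_of_neg (by simpa using geom ha) (by simpa using geom hb))

theorem ite_mul_twoSidedGeometric_div_eq_mul_succ {l1 l2 μ : 𝕜} (hμ : μ ≠ 0) (hl2 : l2 ≠ 0)
    (n : ℤ) : (if 0 ≤ n then l1 else l2) * twoSidedGeometric (l1 / μ) (μ / l2) n =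
      μ * twoSidedGeometric (l1 / μ) (μ / l2) (n + 1) := by
  split_ifs with hn
  · rw [twoSidedGeometric_add_one_of_nonneg _ _ hn, ← mul_assoc, mul_div_cancel₀ _ hμ]
  · rw [twoSidedGeometric_of_neg _ _ (not_le.1 hn), ← mul_assoc, mul_div_cancel₀ _ hl2]

end TwoSidedGeometric

/-- The bilateral weighted shift `W e_n = w_n e_{n+1}` on `ℓ²(ℤ)` with weights
`w_n = λ₁` for `n ≥ 0` and `w_n = λ₂` for `n ≤ −1` (`0 < λ₁ < λ₂`) has point spectrum
exactly the open annulus `{λ : λ₁ < |λ| < λ₂}`. -/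
theorem stmt7 (l1 l2 : ℝ) (hl1 : 0 < l1) (hl12 : l1 < l2)
    (W : lp (fun _ : ℤ => ℂ) 2 →L[ℂ] lp (fun _ : ℤ => ℂ) 2)
    (hW : ∀ n : ℤ, W (lp.single 2 n (1 : ℂ)) =
      (if 0 ≤ n then (l1 : ℂ) else (l2 : ℂ)) • lp.single 2 (n + 1) (1 : ℂ)) :
    {μ : ℂ | ∃ x, x ≠ 0 ∧ W x = μ • x} =
      {μ : ℂ | l1 < ‖μ‖ ∧ ‖μ‖ < l2} := by
  have hl2 : 0 < l2 := hl1.trans hl12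
  ext μ
  constructor
  · rintro ⟨x, hx, hWx⟩
    refine lp.norm_mem_Ioo_of_weightedShift_eq_smul (by norm_num) hW hl1 (fun n => ?_) hx hWx
    split_ifs <;> simp [abs_of_pos, hl1, hl2, hl12.le]
  · rintro ⟨h1, h2⟩
    have hμ : μ ≠ 0 := norm_pos_iff.1 (hl1.trans h1)
    have ha : ‖(l1 : ℂ) / μ‖ < 1 := by
      rwa [norm_div, Complex.norm_real, Real.norm_of_nonneg hl1.le, div_lt_one (hl1.trans h1)]
    have hb : ‖μ / (l2 : ℂ)‖ < 1 := by
      rwa [norm_div, Complex.norm_real, Real.norm_of_nonneg hl2.le, div_lt_one hl2]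
    refine ⟨⟨_, memℓp_twoSidedGeometric (by norm_num) ha hb⟩, fun h => ?_,
      (lp.weightedShift_eq_smul_iff (by norm_num) hW).2
        (ite_mul_twoSidedGeometric_div_eq_mul_succ hμ (by exact_mod_cast hl2.ne'))⟩
    simpa [twoSidedGeometric] using congr_arg (fun y : lp (fun _ : ℤ => ℂ) 2 => y 0) h
end

section
/- Let n₁, n₂, m₁, m₂ be positive integers and 0 < λ₁ < λ₂ with (λ₁^{n₁}λ₂^{n₂})^{1/(n₁+n₂)} < (λ₁^{m₁}λ₂^{m₂})^{1/(m₁+m₂)}. Let W be the bilateral weighted shift on ℓ²(ℤ) whose weight sequence is (n₁+n₂)-periodic on nonnegative indices with n₁ weights equal to λ₁ followed by n₂ weights equal to λ₂, and (m₁+m₂)-periodic on negative indices with m₂ weights equal to λ₂ followed by m₁ weights equal to λ₁. Then every λ with (λ₁^{n₁}λ₂^{n₂})^{1/(n₁+n₂)} < |λ| < (λ₁^{m₁}λ₂^{m₂})^{1/(m₁+m₂)} is an eigenvalue of W. -/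
/-!
An eigenvector `x` of the weighted shift for `μ` must satisfy `w n * x n = μ * x (n + 1)`, which
determines it up to scale: `x k = (w 0 ⋯ w (k-1)) / μ ^ k` and `x (-k) = μ ^ k / (w (-1) ⋯ w (-k))`.
For a periodic positive weight sequence, `(w 0 ⋯ w (k-1)) / G ^ k` is periodic in `k`, where `G` is
the geometric mean of the weights over one period, and hence bounded above and away from zero.
So `x` decays geometrically in both directions as soon as `G₁ < ‖μ‖ < G₂`, where `G₁` and `G₂` are
the geometric means on the nonnegative and on the negative indices.
-/

open Finset Function

theorem Finset.prod_range_add_of_periodic {M : Type*} [CommMonoid M] {v : ℕ → M} {p : ℕ}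
    (hv : Periodic v p) (n : ℕ) :
    ∏ k ∈ range (p + n), v k = (∏ k ∈ range p, v k) * ∏ k ∈ range n, v k := by
  rw [prod_range_add]
  exact congrArg _ (prod_congr rfl fun k _ => by rw [add_comm, hv])

theorem Function.Periodic.prod_range_div_pow {K : Type*} [Field K] {v : ℕ → K} {p : ℕ}
    (hv : Periodic v p) {G : K} (hG : G ≠ 0) (hGp : G ^ p = ∏ k ∈ range p, v k) :
    Periodic (fun n => (∏ k ∈ range n, v k) / G ^ n) p := fun n => by
  simp only [add_comm n, prod_range_add_of_periodic hv, ← hGp, pow_add]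
  exact mul_div_mul_left _ _ (pow_ne_zero p hG)

theorem Function.Periodic.exists_forall_le_and_le_nat {α : Type*} [LinearOrder α] {f : ℕ → α}
    {p : ℕ} (hf : Periodic f p) (hp : 0 < p) : ∃ a b, ∀ n, f a ≤ f n ∧ f n ≤ f b := by
  have hne : (range p).Nonempty := nonempty_range_iff.mpr hp.ne'
  obtain ⟨a, -, ha⟩ := (range p).exists_min_image f hne
  obtain ⟨b, -, hb⟩ := (range p).exists_max_image f hne
  refine ⟨a, b, fun n => ?_⟩
  rw [← hf.map_mod_nat n]
  have hn : n % p ∈ range p := mem_range.mpr (Nat.mod_lt n hp)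
  exact ⟨ha _ hn, hb _ hn⟩

theorem Function.Periodic.exists_mul_pow_le_prod_range_le {v : ℕ → ℝ} {p : ℕ} (hv : Periodic v p)
    (hp : 0 < p) (hpos : ∀ k, 0 < v k) {G : ℝ} (hG : 0 < G)
    (hGp : G ^ p = ∏ k ∈ range p, v k) :
    ∃ c C : ℝ, 0 < c ∧ ∀ n, c * G ^ n ≤ ∏ k ∈ range n, v k ∧ ∏ k ∈ range n, v k ≤ C * G ^ n := by
  obtain ⟨a, b, hab⟩ := (hv.prod_range_div_pow hG.ne' hGp).exists_forall_le_and_le_nat hp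
  refine ⟨(∏ k ∈ range a, v k) / G ^ a, (∏ k ∈ range b, v k) / G ^ b,
    div_pos (prod_pos fun k _ => hpos k) (pow_pos hG a), fun n => ?_⟩
  simpa only [le_div_iff₀ (pow_pos hG n), div_le_iff₀ (pow_pos hG n)] using hab n

def blockSeq {M : Type*} (a b : ℕ) (x y : M) (k : ℕ) : M :=
  if k % (a + b) < a then x else y

theorem blockSeq_periodic {M : Type*} (a b : ℕ) (x y : M) :
    Periodic (blockSeq a b x y) (a + b) := fun k => by
  simp only [blockSeq, Nat.add_mod_right]

theorem blockSeq_pos {M : Type*} [Zero M] [LT M] {a b : ℕ} {x y : M} (hx : 0 < x) (hy : 0 < y)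
    (k : ℕ) : 0 < blockSeq a b x y k := by
  unfold blockSeq
  split_ifs <;> assumption

theorem prod_range_blockSeq {M : Type*} [CommMonoid M] (a b : ℕ) (x y : M) :
    ∏ k ∈ range (a + b), blockSeq a b x y k = x ^ a * y ^ b := by
  have hx : ∀ k ∈ range a, blockSeq a b x y k = x := fun k hk => by
    have hk := mem_range.mp hk
    rw [blockSeq, if_pos (by rwa [Nat.mod_eq_of_lt (by omega)])]
  have hy : ∀ k ∈ range b, blockSeq a b x y (a + k) = y := fun k hk => by
    have hk := mem_range.mp hk
    rw [blockSeq, if_neg (by rw [Nat.mod_eq_of_lt (by omega)]; omega)]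
  rw [prod_range_add, prod_congr rfl hx, prod_congr rfl hy, prod_const, prod_const, card_range,
    card_range]

open scoped ENNReal

section WeightedShift

variable {𝕜 : Type*} [NormedField 𝕜]

noncomputable def shiftEigenseq (w : ℤ → 𝕜) (μ : 𝕜) : ℤ → 𝕜
  | (k : ℕ) => (∏ j ∈ range k, w j) / μ ^ k
  | .negSucc k => μ ^ (k + 1) / ∏ j ∈ range (k + 1), w (.negSucc j)

@[simp]
theorem shiftEigenseq_zero (w : ℤ → 𝕜) (μ : 𝕜) : shiftEigenseq w μ 0 = 1 := by
  simp [shiftEigenseq]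

theorem mul_shiftEigenseq {w : ℤ → 𝕜} {μ : 𝕜} (hμ : μ ≠ 0) (hw : ∀ k, w (.negSucc k) ≠ 0)
    (n : ℤ) : w n * shiftEigenseq w μ n = μ * shiftEigenseq w μ (n + 1) := by
  match n with
  | (k : ℕ) =>
    rw [← Nat.cast_succ]
    simp only [shiftEigenseq, prod_range_succ, pow_succ]
    field_simp
  | .negSucc 0 =>
    rw [show Int.negSucc 0 + 1 = ((0 : ℕ) : ℤ) by rfl]
    simp only [shiftEigenseq, zero_add, pow_one, prod_range_one, prod_range_zero, pow_zero,
      div_one, mul_one]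
    exact mul_div_cancel₀ μ (hw 0)
  | .negSucc (k + 1) =>
    rw [show Int.negSucc (k + 1) + 1 = .negSucc k by rfl]
    simp only [shiftEigenseq, prod_range_succ _ (k + 1), pow_succ]
    have hwk := hw (k + 1)
    have hprod : ∏ j ∈ range (k + 1), w (.negSucc j) ≠ 0 := prod_ne_zero_iff.mpr fun j _ => hw j
    field_simp

theorem memℓp_of_norm_le_geometric {E : Type*} [NormedAddCommGroup E] {a : ℤ → E}
    {r s C D : ℝ} (hr₀ : 0 ≤ r) (hr : r < 1) (hs₀ : 0 ≤ s) (hs : s < 1)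
    (hnat : ∀ k : ℕ, ‖a k‖ ≤ C * r ^ k) (hnegSucc : ∀ k : ℕ, ‖a (.negSucc k)‖ ≤ D * s ^ k)
    {p : ℝ≥0∞} (hp : 1 ≤ p) : Memℓp a p := by
  refine Memℓp.of_exponent_ge (memℓp_gen ?_) hp
  simp only [ENNReal.toReal_one, Real.rpow_one]
  refine .of_nat_of_neg_add_one ?_ ?_
  · exact .of_nonneg_of_le (fun _ => norm_nonneg _) hnat
      ((summable_geometric_of_lt_one hr₀ hr).mul_left C)
  · refine .of_nonneg_of_le (fun _ => norm_nonneg _) (fun k => ?_)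
      ((summable_geometric_of_lt_one hs₀ hs).mul_left D)
    exact (congrArg (‖a ·‖) (Int.negSucc_eq k).symm).le.trans (hnegSucc k)

theorem memℓp_shiftEigenseq {w : ℤ → 𝕜} {μ : 𝕜} {G₁ G₂ c C : ℝ} (hG₁ : 0 ≤ G₁)
    (h₁ : G₁ < ‖μ‖) (h₂ : ‖μ‖ < G₂) (hC : ∀ k, ∏ j ∈ range k, ‖w j‖ ≤ C * G₁ ^ k) (hc : 0 < c)
    (hc' : ∀ k, c * G₂ ^ k ≤ ∏ j ∈ range k, ‖w (.negSucc j)‖) {p : ℝ≥0∞} (hp : 1 ≤ p) :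
    Memℓp (shiftEigenseq w μ) p := by
  have hμ : 0 < ‖μ‖ := hG₁.trans_lt h₁
  have hG₂ : 0 < G₂ := hμ.trans h₂
  refine memℓp_of_norm_le_geometric (C := C) (D := c⁻¹ * (‖μ‖ / G₂)) (by positivity)
    ((div_lt_one hμ).mpr h₁) (by positivity) ((div_lt_one hG₂).mpr h₂) (fun k => ?_)
    (fun k => ?_) hp
  · simp only [shiftEigenseq, norm_div, norm_prod, norm_pow]
    rw [div_pow, ← mul_div_assoc]
    gcongr
    exact hC k
  · simp only [shiftEigenseq, norm_div, norm_prod, norm_pow]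
    calc ‖μ‖ ^ (k + 1) / ∏ j ∈ range (k + 1), ‖w (.negSucc j)‖
        ≤ ‖μ‖ ^ (k + 1) / (c * G₂ ^ (k + 1)) := by gcongr; exact hc' (k + 1)
      _ = c⁻¹ * (‖μ‖ / G₂) * (‖μ‖ / G₂) ^ k := by rw [mul_assoc, ← pow_succ', div_pow]; field_simp

theorem weightedShift_apply_eq_smul {p : ℝ≥0∞} [Fact (1 ≤ p)] (hp : p ≠ ∞) {w : ℤ → 𝕜}
    (W : lp (fun _ : ℤ => 𝕜) p →L[𝕜] lp (fun _ : ℤ => 𝕜) p)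
    (hW : ∀ n, W (lp.single p n 1) = w n • lp.single p (n + 1) 1) {μ : 𝕜}
    (x : lp (fun _ : ℤ => 𝕜) p) (hx : ∀ n, w n * x n = μ * x (n + 1)) : W x = μ • x := by
  have hsum := lp.hasSum_single hp x
  refine (hsum.mapL W).unique ?_
  convert ((Equiv.addRight (1 : ℤ)).hasSum_iff.mpr hsum).const_smul μ using 1 with n
  funext n
  have hsingle : ∀ m (a : 𝕜), lp.single (E := fun _ : ℤ => 𝕜) p m a = a • lp.single p m 1 :=
    fun m a => by rw [← lp.single_smul, smul_eq_mul, mul_one]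
  simp only [Equiv.coe_addRight, comp_apply]
  rw [hsingle n, map_smul, hW, smul_smul, mul_comm, hx, hsingle (n + 1) (x (n + 1)), smul_smul]

theorem exists_weightedShift_eigenvector {p : ℝ≥0∞} [Fact (1 ≤ p)] (hp : p ≠ ∞) {w : ℤ → 𝕜}
    (W : lp (fun _ : ℤ => 𝕜) p →L[𝕜] lp (fun _ : ℤ => 𝕜) p)
    (hW : ∀ n, W (lp.single p n 1) = w n • lp.single p (n + 1) 1) {G₁ G₂ c C : ℝ}
    (hG₁ : 0 ≤ G₁) (hC : ∀ k, ∏ j ∈ range k, ‖w j‖ ≤ C * G₁ ^ k) (hc : 0 < c)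
    (hc' : ∀ k, c * G₂ ^ k ≤ ∏ j ∈ range k, ‖w (.negSucc j)‖) {μ : 𝕜} (h₁ : G₁ < ‖μ‖)
    (h₂ : ‖μ‖ < G₂) : ∃ x : lp (fun _ : ℤ => 𝕜) p, x ≠ 0 ∧ W x = μ • x := by
  have hμ : μ ≠ 0 := norm_pos_iff.mp (hG₁.trans_lt h₁)
  have hw : ∀ k, w (.negSucc k) ≠ 0 := fun k => by
    have hprod : 0 < ∏ j ∈ range (k + 1), ‖w (.negSucc j)‖ :=
      (mul_pos hc (pow_pos (hG₁.trans_lt (h₁.trans h₂)) _)).trans_le (hc' (k + 1))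
    exact norm_ne_zero_iff.mp (prod_ne_zero_iff.mp hprod.ne' k (self_mem_range_succ k))
  refine ⟨⟨_, memℓp_shiftEigenseq hG₁ h₁ h₂ hC hc hc' Fact.out⟩, fun h => ?_,
    weightedShift_apply_eq_smul hp W hW _ (mul_shiftEigenseq hμ hw)⟩
  simpa using congrArg (fun y : lp (fun _ : ℤ => 𝕜) p => (y : ℤ → 𝕜) 0) h

end WeightedShift

theorem Real.rpow_one_div_add_pow {x : ℝ} (hx : 0 ≤ x) {a b : ℕ} (hab : a + b ≠ 0) :
    (x ^ (1 / ((a : ℝ) + b))) ^ (a + b) = x := by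
  rw [one_div, ← Nat.cast_add, Real.rpow_inv_natCast_pow hx hab]

theorem stmt8_general (l1 l2 : ℝ) (hl1 : 0 < l1) (hl12 : l1 < l2)
    (n1 n2 m1 m2 : ℕ) (hn1 : 0 < n1) (hm2 : 0 < m2)
    (w : ℤ → ℝ)
    (hwpos : ∀ n : ℤ, 0 ≤ n →
      w n = if n % ((n1 : ℤ) + n2) < (n1 : ℤ) then l1 else l2)
    (hwneg : ∀ n : ℤ, n < 0 →
      w n = if (-n - 1) % ((m1 : ℤ) + m2) < (m2 : ℤ) then l2 else l1)
    (W : lp (fun _ : ℤ => ℂ) 2 →L[ℂ] lp (fun _ : ℤ => ℂ) 2)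
    (hW : ∀ n : ℤ, W (lp.single 2 n (1 : ℂ)) = (w n : ℂ) • lp.single 2 (n + 1) (1 : ℂ))
    (μ : ℂ) (hμ1 : (l1 ^ n1 * l2 ^ n2) ^ ((1 : ℝ) / (n1 + n2)) < ‖μ‖)
    (hμ2 : ‖μ‖ < (l1 ^ m1 * l2 ^ m2) ^ ((1 : ℝ) / (m1 + m2))) :
    ∃ x, x ≠ 0 ∧ W x = μ • x := by
  have hl2 : 0 < l2 := hl1.trans hl12
  have hnat : ∀ k : ℕ, w k = blockSeq n1 n2 l1 l2 k := fun k => by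
    rw [hwpos k k.cast_nonneg, blockSeq]
    norm_cast
  have hnegSucc : ∀ k : ℕ, w (.negSucc k) = blockSeq m2 m1 l2 l1 k := fun k => by
    rw [hwneg _ (Int.negSucc_lt_zero k), blockSeq, show -Int.negSucc k - 1 = k by omega,
      add_comm m2]
    norm_cast
  have hG₁ : ((l1 ^ n1 * l2 ^ n2) ^ ((1 : ℝ) / (n1 + n2))) ^ (n1 + n2)
      = ∏ k ∈ range (n1 + n2), blockSeq n1 n2 l1 l2 k := by
    rw [prod_range_blockSeq, Real.rpow_one_div_add_pow (by positivity) (by omega)]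
  have hG₂ : ((l1 ^ m1 * l2 ^ m2) ^ ((1 : ℝ) / (m1 + m2))) ^ (m2 + m1)
      = ∏ k ∈ range (m2 + m1), blockSeq m2 m1 l2 l1 k := by
    rw [prod_range_blockSeq, add_comm m2 m1, Real.rpow_one_div_add_pow (by positivity) (by omega),
      mul_comm]
  obtain ⟨_, C, -, hC⟩ := (blockSeq_periodic n1 n2 l1 l2).exists_mul_pow_le_prod_range_le
    (by omega) (blockSeq_pos hl1 hl2) (by positivity) hG₁
  obtain ⟨c, _, hc, hc'⟩ := (blockSeq_periodic m2 m1 l2 l1).exists_mul_pow_le_prod_range_le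
    (by omega) (blockSeq_pos hl2 hl1) (by positivity) hG₂
  refine exists_weightedShift_eigenvector (by simp) W hW (C := C) (by positivity) (fun k => ?_) hc
    (fun k => ?_) hμ1 hμ2
  · simpa only [Complex.norm_real, Real.norm_eq_abs, hnat, abs_of_pos (blockSeq_pos hl1 hl2 _)]
      using (hC k).2
  · simpa only [Complex.norm_real, Real.norm_eq_abs, hnegSucc,
      abs_of_pos (blockSeq_pos hl2 hl1 _)] using (hc' k).1

/-- Periodic-weight bilateral shift: with weights which are `(n₁+n₂)`-periodic on
nonnegative indices (`n₁` weights `λ₁` followed by `n₂` weights `λ₂`) and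
`(m₁+m₂)`-periodic on negative indices (`m₂` weights `λ₂` followed by `m₁` weights `λ₁`),
every `λ` with `(λ₁^{n₁}λ₂^{n₂})^{1/(n₁+n₂)} < |λ| < (λ₁^{m₁}λ₂^{m₂})^{1/(m₁+m₂)}`
is an eigenvalue of the shift. -/
theorem stmt8 (l1 l2 : ℝ) (hl1 : 0 < l1) (hl12 : l1 < l2)
    (n1 n2 m1 m2 : ℕ) (hn1 : 0 < n1) (hn2 : 0 < n2) (hm1 : 0 < m1) (hm2 : 0 < m2)
    (hgm : (l1 ^ n1 * l2 ^ n2) ^ ((1 : ℝ) / (n1 + n2)) <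
      (l1 ^ m1 * l2 ^ m2) ^ ((1 : ℝ) / (m1 + m2)))
    (w : ℤ → ℝ)
    (hwpos : ∀ n : ℤ, 0 ≤ n →
      w n = if n % ((n1 : ℤ) + n2) < (n1 : ℤ) then l1 else l2)
    (hwneg : ∀ n : ℤ, n < 0 →
      w n = if (-n - 1) % ((m1 : ℤ) + m2) < (m2 : ℤ) then l2 else l1)
    (W : lp (fun _ : ℤ => ℂ) 2 →L[ℂ] lp (fun _ : ℤ => ℂ) 2)
    (hW : ∀ n : ℤ, W (lp.single 2 n (1 : ℂ)) = (w n : ℂ) • lp.single 2 (n + 1) (1 : ℂ))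
    (μ : ℂ) (hμ1 : (l1 ^ n1 * l2 ^ n2) ^ ((1 : ℝ) / (n1 + n2)) < ‖μ‖)
    (hμ2 : ‖μ‖ < (l1 ^ m1 * l2 ^ m2) ^ ((1 : ℝ) / (m1 + m2))) :
    ∃ x, x ≠ 0 ∧ W x = μ • x :=
  stmt8_general l1 l2 hl1 hl12 n1 n2 m1 m2 hn1 hm2 w hwpos hwneg W hW μ hμ1 hμ2
end

section
/- Let (α_n)_{n≥1} and (β_n)_{n≥1} be sequences of positive reals with α_n strictly increasing converging to λ₂ and β_n strictly decreasing converging to λ₁, where 0 < λ₁ < λ₂. Let (A_n)_{n∈ℤ} be a sequence of invertible positive operators on Hilbert spaces H_n with spectra σ(A_n) ⊆ [β_{n+1}, β_n] for n ≥ 1 and σ(A_{-n}) ⊆ [α_n, α_{n+1}] for n ≥ 1 (and A₀, A_{−1} bounded invertible with spectrum in [λ₁, λ₂]). Then for every λ ∈ ℂ with λ₁ < |λ| < λ₂, the two-sided sequence defined by y_n = λ^{-n} A_{n-1}A_{n-2}⋯A_0 x for n ≥ 1 and y_n = λ^{-n} A_n^{-1}⋯A_{-1}^{-1} x for n ≤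 −1 (y₀ = x, x a unit vector of H₀) satisfies Σ_{n∈ℤ} ‖y_n‖² < ∞. -/
/-!
Self-adjointness turns the spectral inclusions into operator inequalities: `‖A_n‖ ≤ β_n` for
`n ≥ 1` and `A_{-n} ≥ α_n`. As `β_n ↓ λ₁ < |λ|`, some `β_N < |λ|`, so
`‖y_{n+1}‖ ≤ (β_N / |λ|) ‖y_n‖` for `n ≥ N`; as `α_n ↑ λ₂ > |λ|`, some `α_M > |λ|`, so
`‖y_{-n-1}‖ ≤ (|λ| / α_M) ‖y_{-n}‖` for `n ≥ M`. Both tails of `‖y_n‖²` are then dominated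
by geometric series.
-/

open Filter

lemma spectrum_real_subset_of_subset_image_ofReal {A : Type*} [Ring A] [Algebra ℂ A]
    [Algebra ℝ A] [IsScalarTower ℝ ℂ A] {a : A} {s : Set ℝ}
    (h : spectrum ℂ a ⊆ Complex.ofReal '' s) : spectrum ℝ a ⊆ s := by
  intro t ht
  obtain ⟨t', ht', heq⟩ := h (spectrum.algebraMap_mem ℂ ht)
  obtain rfl : t' = t := Complex.ofReal_injective heq
  exact ht'

section Operator

variable {E : Type*} [NormedAddCommGroup E] [InnerProductSpace ℂ E] [CompleteSpace E]
  {T : E →L[ℂ] E} {a b : ℝ}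

lemma norm_apply_le_of_spectrum_subset_Icc (hT : IsSelfAdjoint T) (ha : 0 ≤ a) (hab : a ≤ b)
    (h : spectrum ℝ T ⊆ Set.Icc a b) (z : E) : ‖T z‖ ≤ b * ‖z‖ := by
  have hT0 : 0 ≤ T := (StarOrderedRing.nonneg_iff_spectrum_nonneg T hT).2
    fun t ht ↦ ha.trans (h ht).1
  have hTb : ‖T‖ ≤ b := (CStarAlgebra.norm_le_iff_le_algebraMap T (ha.trans hab) hT0).2
    ((le_algebraMap_iff_spectrum_le hT).2 fun t ht ↦ (h ht).2)
  exact T.le_of_opNorm_le hTb z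

lemma mul_norm_le_norm_apply_of_spectrum_subset_Ici (hT : IsSelfAdjoint T)
    (h : spectrum ℝ T ⊆ Set.Ici a) (z : E) : a * ‖z‖ ≤ ‖T z‖ := by
  have hpos : (T - algebraMap ℝ (E →L[ℂ] E) a).IsPositive :=
    (algebraMap_le_iff_le_spectrum hT).2 fun t ht ↦ h ht
  have hquad : a * ‖z‖ ^ 2 ≤ ‖T z‖ * ‖z‖ := by
    have := hpos.re_inner_nonneg_left z
    simp only [sub_apply, Algebra.algebraMap_eq_smul_one, smul_apply, inner_sub_left, map_sub,
      sub_nonneg] at this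
    calc a * ‖z‖ ^ 2 = RCLike.re (inner ℂ (a • z) z) := by
          simp [← Complex.coe_smul, ← Complex.ofReal_pow, mul_comm]
      _ ≤ RCLike.re (inner ℂ (T z) z) := this
      _ ≤ ‖T z‖ * ‖z‖ := re_inner_le_norm _ _
  rcases (norm_nonneg z).eq_or_lt with hz | hz
  · simp [← hz]
  · nlinarith

end Operator

section Recurrence

variable {𝕜 E : Type*} [NormedField 𝕜] [SeminormedAddCommGroup E] [NormedSpace 𝕜 E]
  {u : ℕ → E} {r : ℝ}

lemma summable_norm_sq_of_eventually_norm_succ_le (hr0 : 0 ≤ r) (hr1 : r < 1)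
    (h : ∀ᶠ n in atTop, ‖u (n + 1)‖ ≤ r * ‖u n‖) : Summable fun n ↦ ‖u n‖ ^ 2 := by
  refine summable_of_ratio_norm_eventually_le (r := r ^ 2) (by nlinarith) ?_
  filter_upwards [h] with n hn
  simp only [norm_pow, norm_norm, ← mul_pow]
  gcongr

lemma summable_norm_sq_of_smul_succ_eq_of_norm_le {μ : 𝕜} {B : ℕ → E → E} {b : ℝ}
    (hb : 0 ≤ b) (hbμ : b < ‖μ‖) (hrec : ∀ n, μ • u (n + 1) = B n (u n))
    (hB : ∀ᶠ n in atTop, ∀ z, ‖B n z‖ ≤ b * ‖z‖) : Summable fun n ↦ ‖u n‖ ^ 2 := by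
  have hμ : 0 < ‖μ‖ := hb.trans_lt hbμ
  refine summable_norm_sq_of_eventually_norm_succ_le (r := b / ‖μ‖) (by positivity)
    ((div_lt_one hμ).2 hbμ) ?_
  filter_upwards [hB] with n hn
  rw [div_mul_eq_mul_div, le_div_iff₀' hμ, ← norm_smul, hrec]
  exact hn _

lemma summable_norm_sq_of_smul_eq_of_le_norm {μ : 𝕜} {B : ℕ → E → E} {c : ℝ}
    (hμc : ‖μ‖ < c) (hrec : ∀ n, μ • u n = B n (u (n + 1)))
    (hB : ∀ᶠ n in atTop, ∀ z, c * ‖z‖ ≤ ‖B n z‖) : Summable fun n ↦ ‖u n‖ ^ 2 := by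
  have hc : 0 < c := (norm_nonneg μ).trans_lt hμc
  refine summable_norm_sq_of_eventually_norm_succ_le (r := ‖μ‖ / c) (by positivity)
    ((div_lt_one hc).2 hμc) ?_
  filter_upwards [hB] with n hn
  rw [div_mul_eq_mul_div, le_div_iff₀' hc, ← norm_smul, hrec]
  exact hn _

end Recurrence

theorem stmt17_general {H : Type*} [NormedAddCommGroup H] [InnerProductSpace ℂ H] [CompleteSpace H]
    (l1 l2 : ℝ) (hl1 : 0 < l1)
    (α β : ℕ → ℝ) (hαmono : StrictMono α) (hαlim : Tendsto α atTop (nhds l2))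
    (hβmono : StrictAnti β) (hβlim : Tendsto β atTop (nhds l1))
    (A : ℤ → H →L[ℂ] H) (hsa : ∀ n : ℤ, IsSelfAdjoint (A n))
    (hspecP : ∀ n : ℕ, 1 ≤ n →
      spectrum ℂ (A (n : ℤ)) ⊆ Complex.ofReal '' Set.Icc (β (n + 1)) (β n))
    (hspecN : ∀ n : ℕ, 1 ≤ n →
      spectrum ℂ (A (-(n : ℤ))) ⊆ Complex.ofReal '' Set.Icc (α n) (α (n + 1)))
    (μ : ℂ) (hμ1 : l1 < ‖μ‖) (hμ2 : ‖μ‖ < l2)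
    (y : ℤ → H)
    (hrec : ∀ n : ℤ, μ • y (n + 1) = A n (y n)) :
    Summable (fun n : ℤ => ‖y n‖ ^ 2) := by
  have hβ0 : ∀ n, 0 ≤ β n := fun n ↦ hl1.le.trans (hβmono.antitone.le_of_tendsto hβlim n)
  obtain ⟨N, hβN, hN⟩ :=
    ((hβlim.eventually (gt_mem_nhds hμ1)).and (eventually_ge_atTop 1)).exists
  obtain ⟨M, hαM⟩ := (hαlim.eventually (lt_mem_nhds hμ2)).exists
  refine .of_nat_of_neg ?_ ?_
  · refine summable_norm_sq_of_smul_succ_eq_of_norm_le (hβ0 N) hβN (B := fun n ↦ A n)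
      (fun n ↦ mod_cast hrec n) ?_
    filter_upwards [eventually_ge_atTop N] with n hn z
    have hspec := spectrum_real_subset_of_subset_image_ofReal (hspecP n (hN.trans hn))
    calc ‖A n z‖ ≤ β n * ‖z‖ := norm_apply_le_of_spectrum_subset_Icc (hsa n) (hβ0 _)
          (hβmono.antitone n.le_succ) hspec z
      _ ≤ β N * ‖z‖ := by gcongr; exact hβmono.antitone hn
  · refine summable_norm_sq_of_smul_eq_of_le_norm hαM (B := fun k ↦ A (-((k + 1 : ℕ) : ℤ)))
      (fun k ↦ ?_) ?_
    · simpa [add_comm] using hrec (-((k + 1 : ℕ) : ℤ))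
    filter_upwards [eventually_ge_atTop M] with k hk z
    have hspec := spectrum_real_subset_of_subset_image_ofReal (hspecN (k + 1) k.succ_pos)
    refine mul_norm_le_norm_apply_of_spectrum_subset_Ici (hsa _) (fun t ht ↦ ?_) z
    exact (hαmono.monotone (hk.trans k.le_succ)).trans (hspec ht).1

/-- Key summability estimate of Theorem 5.1: with `α_n ↑ λ₂`, `β_n ↓ λ₁`, invertible
self-adjoint operators `A_n` with `σ(A_n) ⊆ [β_{n+1}, β_n]` (`n ≥ 1`),
`σ(A_{−n}) ⊆ [α_n, α_{n+1}]` (`n ≥ 1`), `σ(A₀), σ(A_{−1}) ⊆ [λ₁, λ₂]`, and a unit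
vector `x`, the two-sided sequence defined by `y₀ = x` and `λ y_{n+1} = A_n y_n`
satisfies `Σ_{n∈ℤ} ‖y_n‖² < ∞` whenever `λ₁ < |λ| < λ₂`. -/
theorem stmt17 {H : Type*} [NormedAddCommGroup H] [InnerProductSpace ℂ H] [CompleteSpace H]
    (l1 l2 : ℝ) (hl1 : 0 < l1) (hl12 : l1 < l2)
    (α β : ℕ → ℝ) (hαmono : StrictMono α) (hαlim : Tendsto α atTop (nhds l2))
    (hβmono : StrictAnti β) (hβlim : Tendsto β atTop (nhds l1))
    (A : ℤ → H →L[ℂ] H) (hsa : ∀ n : ℤ, IsSelfAdjoint (A n))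
    (hinv : ∀ n : ℤ, IsUnit (A n))
    (hspecP : ∀ n : ℕ, 1 ≤ n →
      spectrum ℂ (A (n : ℤ)) ⊆ Complex.ofReal '' Set.Icc (β (n + 1)) (β n))
    (hspecN : ∀ n : ℕ, 1 ≤ n →
      spectrum ℂ (A (-(n : ℤ))) ⊆ Complex.ofReal '' Set.Icc (α n) (α (n + 1)))
    (hspec0 : spectrum ℂ (A 0) ⊆ Complex.ofReal '' Set.Icc l1 l2)
    (hspecm1 : spectrum ℂ (A (-1)) ⊆ Complex.ofReal '' Set.Icc l1 l2)
    (μ : ℂ) (hμ1 : l1 < ‖μ‖) (hμ2 : ‖μ‖ < l2)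
    (x : H) (hx : ‖x‖ = 1) (y : ℤ → H) (hy0 : y 0 = x)
    (hrec : ∀ n : ℤ, μ • y (n + 1) = A n (y n)) :
    Summable (fun n : ℤ => ‖y n‖ ^ 2) :=
  stmt17_general l1 l2 hl1 α β hαmono hαlim hβmono hβlim A hsa hspecP hspecN μ hμ1 hμ2 y hrec
end
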